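/- (Leibniz type rule for the Caputo–Katugampola derivative.) Let 0 < α < 1, ρ > 0, 0 < a < b, and take Ψ(x) := x^ρ. Suppose f = h ∘ Ψ and g = w ∘ Ψ with h, w : ℝ → ℝ real-analytic with everywhere-convergent power series, and write f⁽ᵐ⁾(x) := h⁽ᵐ⁾(x^ρ). Then for every x ∈ (a,b): (^{C}D^{α;Ψ}(f·g))(x) = Σ_{m=0}^∞ binom(α, m) f⁽ᵐ⁾(x) (^{C}D^{α−m;Ψ} g)(x) + g(a)(f(x) − f(a)) (x^ρ − a^ρ)^{−α} / Γ(1−α), the series converging. -/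

import Mathlib

open Real

/-- Generalized binomial coefficient `binom(γ, n) = γ(γ-1)⋯(γ-n+1)/n!`. -/
noncomputable def genBinom (γ : ℝ) (n : ℕ) : ℝ :=
  (∏ i ∈ Finset.range n, (γ - (i : ℝ))) / (n.factorial : ℝ)

/-- Ψ-Riemann–Liouville fractional integral of order `α` with base point `a`;
by convention the order-0 integral is the identity. -/
noncomputable def psiI (a : ℝ) (Ψ f : ℝ → ℝ) (α : ℝ) (x : ℝ) : ℝ :=
  if α = 0 then f x
  else (Real.Gamma α)⁻¹ * ∫ t in a..x, deriv Ψ t * (Ψ x - Ψ t) ^ (α - 1) * f t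

/-- Ψ-Riemann–Liouville fractional derivative of order `γ` (for `γ ≤ 0` it is the
fractional integral of order `-γ`, the order-0 case being the identity). -/
noncomputable def psiRLD (a : ℝ) (Ψ f : ℝ → ℝ) (γ : ℝ) (x : ℝ) : ℝ :=
  if γ ≤ 0 then psiI a Ψ f (-γ) x
  else (deriv Ψ x)⁻¹ * deriv (fun y => psiI a Ψ f (1 - γ) y) x

/-- Ψ-Caputo fractional derivative of order `γ` (for `γ ≤ 0` it is the
fractional integral of order `-γ`). -/
noncomputable def psiCD (a : ℝ) (Ψ f : ℝ → ℝ) (γ : ℝ) (x : ℝ) : ℝ :=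
  if γ ≤ 0 then psiI a Ψ f (-γ) x
  else psiI a Ψ (fun t => (deriv Ψ t)⁻¹ * deriv f t) (1 - γ) x

/-- Ψ-Hilfer fractional derivative of order `α` and type `β`. -/
noncomputable def psiHD (a : ℝ) (Ψ f : ℝ → ℝ) (α β : ℝ) (x : ℝ) : ℝ :=
  psiI a Ψ
    (fun y => (deriv Ψ y)⁻¹ * deriv (fun z => psiI a Ψ f ((1 - β) * (1 - α)) z) y)
    (β * (1 - α)) x

/-- Classical Riemann–Liouville fractional integral with base point `a`. -/
noncomputable def rlI (a : ℝ) (α : ℝ) (f : ℝ → ℝ) (x : ℝ) : ℝ :=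
  if α = 0 then f x
  else (Real.Gamma α)⁻¹ * ∫ t in a..x, (x - t) ^ (α - 1) * f t

/-- Classical Riemann–Liouville fractional derivative (fractional integral for `γ ≤ 0`). -/
noncomputable def rlD (a : ℝ) (γ : ℝ) (f : ℝ → ℝ) (x : ℝ) : ℝ :=
  if γ ≤ 0 then rlI a (-γ) f x
  else deriv (fun y => rlI a (1 - γ) f y) x

/-- Classical Caputo fractional derivative (fractional integral for `γ ≤ 0`). -/
noncomputable def capD (a : ℝ) (γ : ℝ) (f : ℝ → ℝ) (x : ℝ) : ℝ :=
  if γ ≤ 0 then rlI a (-γ) f x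
  else rlI a (1 - γ) (deriv f) x

/-- Classical Hilfer fractional derivative of order `α` and type `β`. -/
noncomputable def hilD (a : ℝ) (α β : ℝ) (f : ℝ → ℝ) (x : ℝ) : ℝ :=
  rlI a (β * (1 - α))
    (fun y => deriv (fun z => rlI a ((1 - β) * (1 - α)) f z) y) x

/-- Hadamard fractional integral with base point `a`. -/
noncomputable def hadI (a : ℝ) (α : ℝ) (f : ℝ → ℝ) (x : ℝ) : ℝ :=
  if α = 0 then f x
  else (Real.Gamma α)⁻¹ * ∫ t in a..x, (Real.log x - Real.log t) ^ (α - 1) * f t / t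

/-- Caputo–Hadamard fractional derivative (Hadamard fractional integral for `γ ≤ 0`). -/
noncomputable def chD (a : ℝ) (γ : ℝ) (f : ℝ → ℝ) (x : ℝ) : ℝ :=
  if γ ≤ 0 then hadI a (-γ) f x
  else hadI a (1 - γ) (fun t => t * deriv f t) x

/-- `h` is real-analytic with a power series converging on all of `ℝ`. -/
def EntireReal (h : ℝ → ℝ) : Prop :=
  ∃ p : FormalMultilinearSeries ℝ ℝ ℝ, HasFPowerSeriesOnBall h p 0 ⊤

/-!
Substituting `u = t ^ ρ` turns the Ψ-fractional operators of `h ∘ Ψ` and `w ∘ Ψ` into the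
classical Riemann–Liouville and Caputo operators of `h` and `w` on `[a ^ ρ, x ^ ρ] = [A, X]`, so it
suffices to prove the Leibniz rule for the classical Caputo derivative. There, write
`(h w)' = h' w + h w'` and expand `h'` and `h` in their Taylor series at `X`; as the kernel
`(X - u) ^ (-α)` is integrable, the series may be integrated term by term. Integrating by parts,
`∫ (X - u) ^ (m - α) w' = (m - α) ∫ (X - u) ^ (m - 1 - α) w - (X - A) ^ (m - α) w A`; the two
contributions of order `m` then combine to `binom(α, m) h⁽ᵐ⁾(X) I^(m - α) w (X)`, and the boundary
terms sum, by Taylor's formula at `A`, to `w A (h A - h X) (X - A) ^ (-α)`.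
-/

open MeasureTheory Set intervalIntegral
open scoped Nat

theorem HasFPowerSeriesOnBall.iteratedDeriv_div_factorial_eq_coeff {𝕜 : Type*}
    [NontriviallyNormedField 𝕜] [CompleteSpace 𝕜] [CharZero 𝕜] {h : 𝕜 → 𝕜}
    {q : FormalMultilinearSeries 𝕜 𝕜 𝕜} {X : 𝕜} {r : ENNReal}
    (hq : HasFPowerSeriesOnBall h q X r) (n : ℕ) :
    iteratedDeriv n h X / n ! = q.coeff n := by
  rw [iteratedDeriv_eq_iteratedFDeriv, ← hq.factorial_smul 1 n, nsmul_eq_mul,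
    mul_div_cancel_left₀ _ (Nat.cast_ne_zero.2 n.factorial_ne_zero)]
  rfl

namespace EntireReal

variable {h : ℝ → ℝ}

theorem exists_hasFPowerSeriesOnBall (hh : EntireReal h) (X : ℝ) :
    ∃ q : FormalMultilinearSeries ℝ ℝ ℝ, HasFPowerSeriesOnBall h q X ⊤ := by
  obtain ⟨p, hp⟩ := hh
  exact ⟨_, by simpa using hp.changeOrigin (y := X) (by simp)⟩

theorem differentiable (hh : EntireReal h) : Differentiable ℝ h := fun y => by
  obtain ⟨q, hq⟩ := hh.exists_hasFPowerSeriesOnBall y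
  exact hq.hasFPowerSeriesAt.differentiableAt

theorem deriv (hh : EntireReal h) : EntireReal (deriv h) := by
  obtain ⟨p, hp⟩ := hh
  refine ⟨(ContinuousLinearMap.apply ℝ ℝ (1 : ℝ)).compFormalMultilinearSeries p.derivSeries, ?_⟩
  have hd : _root_.deriv h = ContinuousLinearMap.apply ℝ ℝ (1 : ℝ) ∘ fderiv ℝ h := by
    ext y; simp
  rw [hd]
  exact (ContinuousLinearMap.apply ℝ ℝ (1 : ℝ)).comp_hasFPowerSeriesOnBall hp.fderiv

theorem hasSum_taylorSeries (hh : EntireReal h) (X u : ℝ) :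
    HasSum (fun n => iteratedDeriv n h X / n ! * (u - X) ^ n) (h u) := by
  obtain ⟨q, hq⟩ := hh.exists_hasFPowerSeriesOnBall X
  simpa [hq.iteratedDeriv_div_factorial_eq_coeff, mul_comm] using
    hq.hasSum (y := u - X) (by simp)

theorem summable_norm_iteratedDeriv_div_factorial_mul_pow (hh : EntireReal h) (X : ℝ) {R : ℝ}
    (hR : 0 ≤ R) :
    Summable (fun n => ‖iteratedDeriv n h X / (n ! : ℝ)‖ * R ^ n) := by
  obtain ⟨q, hq⟩ := hh.exists_hasFPowerSeriesOnBall X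
  lift R to NNReal using hR
  simpa [hq.iteratedDeriv_div_factorial_eq_coeff,
    ← FormalMultilinearSeries.norm_apply_eq_norm_coef] using
    q.summable_norm_mul_pow (ENNReal.coe_lt_top.trans_le hq.r_le)

end EntireReal

theorem genBinom_succ_mul_factorial (γ : ℝ) (n : ℕ) :
    genBinom γ (n + 1) * (n + 1)! = genBinom γ n * n ! * (γ - n) := by
  simp only [genBinom, Finset.prod_range_succ]
  field_simp

theorem Gamma_one_sub_mul_genBinom_succ {α : ℝ} (hα : α < 1) (n : ℕ) :
    Gamma (1 - α) * (genBinom α (n + 1) * (n + 1)!) = (-1) ^ n * α * Gamma (n + 1 - α) := by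
  induction n with
  | zero => simp [genBinom, mul_comm]
  | succ n ih =>
    have hpos : 0 < (n : ℝ) + 1 - α := by linarith [n.cast_nonneg (α := ℝ)]
    rw [genBinom_succ_mul_factorial, Nat.cast_add_one,
      show (n : ℝ) + 1 + 1 - α = n + 1 - α + 1 by ring, Gamma_add_one hpos.ne', ← mul_assoc, ih,
      pow_succ]
    ring

section ChangeOfVariables

variable {a x : ℝ} {Ψ : ℝ → ℝ}

theorem psiI_comp_eq_rlI (hax : a ≤ x) (hΨc : ContinuousOn Ψ (Icc a x))
    (hΨd : ∀ t ∈ Ioo a x, DifferentiableAt ℝ Ψ t) (hΨ' : ∀ t ∈ Ioo a x, 0 ≤ deriv Ψ t)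
    (Λ : ℝ → ℝ) (γ : ℝ) :
    psiI a Ψ (fun t => Λ (Ψ t)) γ x = rlI (Ψ a) γ Λ (Ψ x) := by
  unfold psiI rlI
  split_ifs
  · rfl
  · rw [← integral_comp_mul_deriv_of_deriv_nonneg (g := fun u => (Ψ x - u) ^ (γ - 1) * Λ u)
      (f' := deriv Ψ) (by rwa [uIcc_of_le hax])
      (by simpa [hax] using fun t ht => (hΨd t ht).hasDerivAt) (by simpa [hax] using hΨ')]
    simp only [Function.comp_apply, mul_comm, mul_left_comm]

theorem psiCD_comp_eq_capD (hax : a ≤ x) (hΨc : ContinuousOn Ψ (Icc a x))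
    (hΨd : ∀ t ∈ Ioo a x, DifferentiableAt ℝ Ψ t) (hΨ' : ∀ t ∈ Ioo a x, 0 < deriv Ψ t)
    {Λ : ℝ → ℝ} (hΛ : Differentiable ℝ Λ) {γ : ℝ} (hγ : γ < 1) :
    psiCD a Ψ (fun t => Λ (Ψ t)) γ x = capD (Ψ a) γ Λ (Ψ x) := by
  have hΨ'_nonneg := fun t ht => (hΨ' t ht).le
  unfold psiCD capD
  split_ifs
  · exact psiI_comp_eq_rlI hax hΨc hΨd hΨ'_nonneg Λ (-γ)
  · rw [← psiI_comp_eq_rlI hax hΨc hΨd hΨ'_nonneg]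
    unfold psiI
    rw [if_neg (by linarith), if_neg (by linarith)]
    congr 1
    refine integral_congr_Ioo_of_le hax fun t ht => ?_
    have hchain : deriv (fun t => Λ (Ψ t)) t = deriv Λ (Ψ t) * deriv Ψ t :=
      deriv_comp t (hΛ _) (hΨd t ht)
    simp only [hchain]
    field_simp [(hΨ' t ht).ne']

end ChangeOfVariables

section RiemannLiouvilleKernel

variable {A X : ℝ}

theorem sub_pow_mul_rpow_of_lt {u : ℝ} (hu : u < X) (n : ℕ) (β : ℝ) :
    (u - X) ^ n * (X - u) ^ β = (-1) ^ n * (X - u) ^ (n + β) := by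
  rw [show u - X = -(X - u) by ring, neg_pow, mul_assoc, rpow_add (sub_pos.2 hu), rpow_natCast]

theorem intervalIntegrable_sub_rpow_mul {β : ℝ} (hβ : -1 < β) {Λ : ℝ → ℝ}
    (hΛ : ContinuousOn Λ (uIcc A X)) :
    IntervalIntegrable (fun u => (X - u) ^ β * Λ u) volume A X := by
  have hkernel := (intervalIntegrable_rpow' hβ (a := 0) (b := X - A)).comp_sub_left X
  simp only [sub_zero, sub_sub_cancel] at hkernel
  exact hkernel.symm.mul_continuousOn hΛ

theorem hasSum_integral_mul_of_summable_norm_mul_pow {c : ℕ → ℝ} {g : ℝ → ℝ} {R : ℝ}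
    (hc : Summable fun n => ‖c n‖ * R ^ n) (hR : ∀ u ∈ uIcc A X, |u - X| ≤ R)
    (hg : IntervalIntegrable g volume A X) :
    HasSum (fun n => ∫ u in A..X, c n * (u - X) ^ n * g u)
      (∫ u in A..X, (∑' n, c n * (u - X) ^ n) * g u) := by
  have hbound : ∀ n, ∀ u ∈ uIoc A X, ‖c n * (u - X) ^ n‖ ≤ ‖c n‖ * R ^ n := fun n u hu => by
    rw [norm_mul, norm_pow]
    gcongr
    exact hR u (uIoc_subset_uIcc hu)
  refine hasSum_integral_of_dominated_convergence (fun n u => ‖c n‖ * R ^ n * ‖g u‖)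
    (fun n => ((by fun_prop : Continuous fun u => c n * (u - X) ^ n).aestronglyMeasurable).mul
      hg.def'.aestronglyMeasurable)
    (fun n => ae_of_all _ fun u hu => ?_) (ae_of_all _ fun u _ => hc.mul_right _) ?_
    (ae_of_all _ fun u hu => ?_)
  · rw [norm_mul]
    gcongr
    exact hbound n u hu
  · simp_rw [tsum_mul_right]
    exact hg.norm.const_mul _
  · exact (Summable.of_norm_bounded hc (hbound · u hu)).hasSum.mul_right _

theorem integral_sub_rpow_mul_deriv (hAX : A ≤ X) {β : ℝ} (hβ : 0 < β) {w w' : ℝ → ℝ}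
    (hw : ContinuousOn w (Icc A X)) (hww' : ∀ u ∈ Ioo A X, HasDerivAt w (w' u) u)
    (hw' : IntervalIntegrable w' volume A X) :
    ∫ u in A..X, (X - u) ^ β * w' u =
      β * (∫ u in A..X, (X - u) ^ (β - 1) * w u) - (X - A) ^ β * w A := by
  have hkernel : ∀ u ∈ Ioo A X, HasDerivAt (fun u => (X - u) ^ β) (-β * (X - u) ^ (β - 1)) u :=
    fun u hu => by
      simpa using ((hasDerivAt_id u).const_sub X).rpow_const (p := β)
        (Or.inl (sub_pos.2 hu.2).ne')
  rw [integral_mul_deriv_eq_deriv_mul_of_hasDerivAt (u := fun u => (X - u) ^ β)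
    (u' := fun u => -β * (X - u) ^ (β - 1))
    ((continuousOn_const.sub continuousOn_id).rpow_const fun _ _ => Or.inr hβ.le)
    (by rwa [uIcc_of_le hAX]) (by simpa [hAX] using hkernel) (by simpa [hAX] using hww') _ hw']
  · rw [sub_self, zero_rpow hβ.ne', zero_mul, zero_sub]
    simp only [mul_assoc, intervalIntegral.integral_const_mul]
    ring
  · simpa only [mul_one] using (intervalIntegrable_sub_rpow_mul (by linarith : -1 < β - 1)
      (continuousOn_const (c := (1 : ℝ)))).const_mul (-β)

end RiemannLiouvilleKernel

section Caputo

variable {A X α : ℝ}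

theorem EntireReal.hasSum_integral_sub_rpow_mul {h : ℝ → ℝ} (hh : EntireReal h) (hAX : A ≤ X)
    {β : ℝ} (hβ : -1 < β) {Λ : ℝ → ℝ} (hΛ : ContinuousOn Λ (Icc A X)) :
    HasSum
      (fun n => iteratedDeriv n h X / n ! * (-1) ^ n * ∫ u in A..X, (X - u) ^ (n + β) * Λ u)
      (∫ u in A..X, (X - u) ^ β * (h u * Λ u)) := by
  have hR : ∀ u ∈ uIcc A X, |u - X| ≤ X - A := fun u hu => by
    rw [uIcc_of_le hAX] at hu
    rw [abs_sub_comm, abs_of_nonneg (by linarith [hu.2])]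
    linarith [hu.1]
  have hsum := hasSum_integral_mul_of_summable_norm_mul_pow
    (hh.summable_norm_iteratedDeriv_div_factorial_mul_pow X (sub_nonneg.2 hAX)) hR
    (intervalIntegrable_sub_rpow_mul hβ (by rwa [uIcc_of_le hAX]))
  simp only [(hh.hasSum_taylorSeries X _).tsum_eq] at hsum
  convert hsum using 1
  · funext n
    rw [← intervalIntegral.integral_const_mul]
    refine integral_congr_Ioo_of_le hAX fun u hu => ?_
    rw [mul_assoc _ ((u - X) ^ n), ← mul_assoc ((u - X) ^ n), sub_pow_mul_rpow_of_lt hu.2]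
    ring
  · congr 1
    funext u
    ring

theorem capD_eq_integral (hα0 : 0 < α) (hα1 : α < 1) (Λ : ℝ → ℝ) :
    capD A α Λ X = (Gamma (1 - α))⁻¹ * ∫ u in A..X, (X - u) ^ (-α) * deriv Λ u := by
  rw [capD, if_neg (not_le.2 hα0), rlI, if_neg (by linarith), sub_sub_cancel_left]

theorem capD_mul_eq_integral_add (hα0 : 0 < α) (hα1 : α < 1) {h w : ℝ → ℝ}
    (hh : Differentiable ℝ h) (hh' : Continuous (deriv h))
    (hw : Differentiable ℝ w) (hw' : Continuous (deriv w)) :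
    capD A α (fun u => h u * w u) X = (Gamma (1 - α))⁻¹ *
      ((∫ u in A..X, (X - u) ^ (-α) * (deriv h u * w u)) +
        ∫ u in A..X, (X - u) ^ (-α) * (h u * deriv w u)) := by
  have hβ : -1 < -α := by linarith
  rw [capD_eq_integral hα0 hα1, ← integral_add
    (intervalIntegrable_sub_rpow_mul hβ (Λ := fun u => deriv h u * w u)
      (hh'.mul hw.continuous).continuousOn)
    (intervalIntegrable_sub_rpow_mul hβ (Λ := fun u => h u * deriv w u)
      (hh.continuous.mul hw').continuousOn)]
  simp only [deriv_fun_mul (hh _) (hw _), mul_add]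

-- The exponent is written `n + -α` to match `EntireReal.hasSum_integral_sub_rpow_mul` at `β = -α`.
theorem capD_sub_natCast_succ_eq_integral (hα1 : α < 1) (n : ℕ) (Λ : ℝ → ℝ) :
    capD A (α - (n + 1 : ℕ)) Λ X =
      (Gamma (n + 1 - α))⁻¹ * ∫ u in A..X, (X - u) ^ (n + -α) * Λ u := by
  have hn : (0 : ℝ) ≤ n := n.cast_nonneg
  rw [capD, if_pos (by push_cast; linarith), rlI, if_neg (by push_cast; linarith)]
  push_cast
  ring_nf

/-- The `(n + 1)`-st term of the Leibniz series, split into the contributions of `h' w` and, after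
integration by parts, of `h w'`. -/
theorem Gamma_one_sub_mul_genBinom_succ_mul_capD (hAX : A ≤ X) (hα1 : α < 1) {w : ℝ → ℝ}
    (hw : Differentiable ℝ w) (hw' : Continuous (deriv w)) (n : ℕ) :
    Gamma (1 - α) * genBinom α (n + 1) * capD A (α - (n + 1 : ℕ)) w X =
      (-1) ^ n / n ! * (∫ u in A..X, (X - u) ^ (n + -α) * w u) +
        (-1) ^ (n + 1) / (n + 1)! *
          ((∫ u in A..X, (X - u) ^ ((n + 1 : ℕ) + -α) * deriv w u) +
            (X - A) ^ ((n + 1 : ℕ) + -α) * w A) := by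
  have hn : (0 : ℝ) ≤ n := n.cast_nonneg
  rw [capD_sub_natCast_succ_eq_integral hα1, integral_sub_rpow_mul_deriv hAX
    (by push_cast; linarith) hw.continuous.continuousOn (fun u _ => (hw u).hasDerivAt)
    (hw'.intervalIntegrable _ _), show ((n + 1 : ℕ) : ℝ) + -α - 1 = n + -α by push_cast; ring]
  have hΓ := Gamma_one_sub_mul_genBinom_succ hα1 n
  have hΓ' : Gamma (n + 1 - α) ≠ 0 := (Gamma_pos_of_pos (by linarith)).ne'
  rw [Nat.factorial_succ, Nat.cast_mul] at hΓ ⊢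
  field_simp
  push_cast at hΓ ⊢
  linear_combination (∫ u in A..X, (X - u) ^ (n - α) * w u) * hΓ

theorem hasSum_leibniz_capD (hAX : A < X) (hα0 : 0 < α) (hα1 : α < 1)
    {h w : ℝ → ℝ} (hh : EntireReal h) (hw : EntireReal w) :
    HasSum (fun m : ℕ => genBinom α m * iteratedDeriv m h X * capD A (α - m) w X)
      (capD A α (fun u => h u * w u) X - w A * (h X - h A) * (X - A) ^ (-α) / Gamma (1 - α)) := by
  have hβ : -1 < -α := by linarith
  have hwd := hw.differentiable
  have hw'd := hw.deriv.differentiable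
  have hprod := capD_mul_eq_integral_add (A := A) (X := X) hα0 hα1 hh.differentiable
    hh.deriv.differentiable.continuous hwd hw'd.continuous
  have hsum_deriv_h := hh.deriv.hasSum_integral_sub_rpow_mul hAX.le hβ hwd.continuous.continuousOn
  have hsum_deriv_w := hh.hasSum_integral_sub_rpow_mul hAX.le hβ hw'd.continuous.continuousOn
  have htaylor := (hh.hasSum_taylorSeries X A).mul_right ((X - A) ^ (-α) * w A)
  -- Split off `m = 0`, the only term without an `h' w` contribution. `convert!` identifies the
  -- two instance paths to `AddCommMonoid ℝ` of the shifted sum and of `HasSum.mul_left`.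
  rw [← hasSum_nat_add_iff' 1]
  convert! ((hsum_deriv_h.add ((hasSum_nat_add_iff' 1).mpr hsum_deriv_w)).add
    ((hasSum_nat_add_iff' 1).mpr htaylor)).mul_left (Gamma (1 - α))⁻¹ using 1
  · funext n
    have hcoeff := Gamma_one_sub_mul_genBinom_succ_mul_capD hAX.le hα1 hwd hw'd.continuous n
    have hboundary := sub_pow_mul_rpow_of_lt hAX (n + 1) (-α)
    rw [← iteratedDeriv_succ', eq_inv_mul_iff_mul_eq₀ (Gamma_pos_of_pos (by linarith)).ne']
    linear_combination iteratedDeriv (n + 1) h X * hcoeff -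
      (iteratedDeriv (n + 1) h X / (n + 1)! * w A) * hboundary
  · simp only [Finset.sum_range_one, genBinom, Finset.range_zero, Finset.prod_empty,
      Nat.factorial_zero, Nat.cast_zero, Nat.cast_one, div_one, sub_zero, iteratedDeriv_zero,
      pow_zero, zero_add, one_mul, mul_one, hprod, capD_eq_integral hα0 hα1]
    field_simp
    ring

end Caputo

theorem leibniz_Caputo_Katugampola_general
    (a b ρ : ℝ) (ha : 0 < a) (hρ : 0 < ρ)
    (α : ℝ) (hα0 : 0 < α) (hα1 : α < 1)
    (f g h w : ℝ → ℝ)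
    (hf : f = fun t => h (t ^ ρ)) (hg : g = fun t => w (t ^ ρ))
    (hh : EntireReal h) (hw : EntireReal w)
    (x : ℝ) (hx : x ∈ Set.Ioo a b) :
    HasSum
      (fun m : ℕ => genBinom α m * iteratedDeriv m h (x ^ ρ) *
        psiCD a (fun t => t ^ ρ) g (α - m) x)
      (psiCD a (fun t => t ^ ρ) (fun t => f t * g t) α x -
        g a * (f x - f a) * (x ^ ρ - a ^ ρ) ^ (-α) / Real.Gamma (1 - α)) := by
  subst hf hg
  have hax : a < x := hx.1
  have hΨc : ContinuousOn (fun t : ℝ => t ^ ρ) (Icc a x) :=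
    continuousOn_id.rpow_const fun t ht => Or.inl (ha.trans_le ht.1).ne'
  have hΨd : ∀ t ∈ Ioo a x, DifferentiableAt ℝ (fun t : ℝ => t ^ ρ) t :=
    fun t ht => differentiableAt_rpow_const_of_ne ρ (ha.trans ht.1).ne'
  have hΨ' : ∀ t ∈ Ioo a x, 0 < deriv (fun t : ℝ => t ^ ρ) t := fun t ht => by
    rw [Real.deriv_rpow_const]
    exact mul_pos hρ (rpow_pos_of_pos (ha.trans ht.1) _)
  convert hasSum_leibniz_capD (rpow_lt_rpow ha.le hax hρ) hα0 hα1 hh hw using 1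
  · funext m
    rw [psiCD_comp_eq_capD hax.le hΨc hΨd hΨ' hw.differentiable
      (by linarith [m.cast_nonneg (α := ℝ)])]
  · rw [psiCD_comp_eq_capD hax.le hΨc hΨd hΨ' (Λ := fun u => h u * w u)
      (hh.differentiable.mul hw.differentiable) hα1]

/-- Leibniz type rule for the Caputo–Katugampola fractional derivative,
i.e. the Ψ-Caputo derivative with `Ψ(x) = x^ρ`. -/
theorem leibniz_Caputo_Katugampola
    (a b ρ : ℝ) (ha : 0 < a) (hab : a < b) (hρ : 0 < ρ)
    (α : ℝ) (hα0 : 0 < α) (hα1 : α < 1)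
    (f g h w : ℝ → ℝ)
    (hf : f = fun t => h (t ^ ρ)) (hg : g = fun t => w (t ^ ρ))
    (hh : EntireReal h) (hw : EntireReal w)
    (x : ℝ) (hx : x ∈ Set.Ioo a b) :
    HasSum
      (fun m : ℕ => genBinom α m * iteratedDeriv m h (x ^ ρ) *
        psiCD a (fun t => t ^ ρ) g (α - m) x)
      (psiCD a (fun t => t ^ ρ) (fun t => f t * g t) α x -
        g a * (f x - f a) * (x ^ ρ - a ^ ρ) ^ (-α) / Real.Gamma (1 - α)) :=
  leibniz_Caputo_Katugampola_general a b ρ ha hρ α hα0 hα1 f g h w hf hg hh hw x hx
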